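/- arXiv:1907.12170 — 7 statements merged into one kernel-verified Lean document; each statement's English description precedes it below -/
import Mathlib

section
/- The (2m)-th moment of the semicircle distribution equals the m-th Catalan number: ∫ x^{2m} dμ_sc(x) = (1/(m+1))·C(2m, m), where μ_sc has density (1/(2π))·√((4−x²)₊) on ℝ. -/
open MeasureTheory Real
open scoped NNReal ENNReal

/-- The semicircle distribution: density `(2π)⁻¹ √((4 - x²)₊)` w.r.t. Lebesgue measure. -/
noncomputable def semicircle : Measure ℝ :=
  volume.withDensity (fun x => ENNReal.ofReal ((2 * π)⁻¹ * Real.sqrt (max (4 - x ^ 2) 0)))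

noncomputable def Pprod (n : ℕ) : ℝ := ∏ i ∈ Finset.range n, (2 * (i : ℝ) + 1) / (2 * i + 2)

lemma sin_pow_sym (n : ℕ) :
    ∫ θ in (-(π/2))..(π/2), Real.sin θ ^ (2 * n) = π * Pprod n := by
  have hc : Continuous fun x : ℝ => Real.sin x ^ (2 * n) := by fun_prop
  have h1 : ∫ θ in (-(π/2))..(0:ℝ), Real.sin θ ^ (2 * n)
      = ∫ θ in (0:ℝ)..(π/2), Real.sin θ ^ (2 * n) := by
    have := intervalIntegral.integral_comp_neg (a := (0:ℝ)) (b := π/2)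
      (fun x => Real.sin x ^ (2 * n))
    simp only [neg_zero] at this
    rw [← this]
    congr 1
    ext x
    rw [Real.sin_neg, pow_mul, pow_mul, neg_sq]
  have h2 : ∫ θ in (0:ℝ)..(π/2), Real.sin θ ^ (2 * n)
      = ∫ θ in (0:ℝ)..(π/2), Real.cos θ ^ (2 * n) := by
    have := intervalIntegral.integral_comp_sub_left (a := (0:ℝ)) (b := π/2)
      (fun x => Real.sin x ^ (2 * n)) (π/2)
    simp only [sub_self, sub_zero, Real.sin_pi_div_two_sub] at this
    rw [← this]
  have h3 := EulerSine.integral_cos_pow_eq (2 * n)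
  have h4 : ∫ θ in (-(π/2))..(π/2), Real.sin θ ^ (2 * n)
      = (∫ θ in (-(π/2))..(0:ℝ), Real.sin θ ^ (2 * n))
        + ∫ θ in (0:ℝ)..(π/2), Real.sin θ ^ (2 * n) :=
    (intervalIntegral.integral_add_adjacent_intervals
      (hc.intervalIntegrable _ _) (hc.intervalIntegrable _ _)).symm
  rw [h4, h1, h2, h3, integral_sin_pow_even, Pprod]
  ring

lemma binom_prod (m : ℕ) : (4:ℝ)^m * Pprod m = (Nat.choose (2*m) m : ℝ) := by
  induction m with
  | zero => simp [Pprod]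
  | succ k ih =>
    have key := Nat.succ_mul_centralBinom_succ k
    rw [Nat.centralBinom, Nat.centralBinom] at key
    have hk : ((k:ℝ)+1) ≠ 0 := by positivity
    have keyR : ((k:ℝ)+1) * (Nat.choose (2*(k+1)) (k+1) : ℝ)
        = 2 * (2*k+1) * (Nat.choose (2*k) k : ℝ) := by
      exact_mod_cast congrArg (Nat.cast : ℕ → ℝ) (by convert key using 3)
    rw [Pprod, Finset.prod_range_succ, ← Pprod]
    have h2 : (2*(k:ℝ)+2) ≠ 0 := by positivity
    calc (4:ℝ)^(k+1) * (Pprod k * ((2*(k:ℝ)+1)/(2*k+2)))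
        = ((4:ℝ)^k * Pprod k) * (4*(2*(k:ℝ)+1)/(2*k+2)) := by ring
      _ = (Nat.choose (2*k) k : ℝ) * (2*(2*(k:ℝ)+1)/((k:ℝ)+1)) := by
          rw [ih]; congr 1; field_simp; ring
      _ = (Nat.choose (2*(k+1)) (k+1) : ℝ) := by
          field_simp
          linarith [keyR]

theorem semicircle_even_moment (m : ℕ) :
    ∫ x, x ^ (2 * m) ∂semicircle = (1 / (m + 1 : ℝ)) * (Nat.choose (2 * m) m : ℝ) := by
  set d : ℝ → ℝ := fun x => (2 * π)⁻¹ * Real.sqrt (max (4 - x ^ 2) 0) with hd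
  have hd_nonneg : ∀ x, 0 ≤ d x := fun x => by
    have : (0:ℝ) ≤ (2*π)⁻¹ := by positivity
    exact mul_nonneg this (Real.sqrt_nonneg _)
  have hd_cont : Continuous d := by
    apply Continuous.mul continuous_const
    exact Real.continuous_sqrt.comp ((continuous_const.sub (continuous_pow 2)).max
      continuous_const)
  set F : ℝ → ℝ := fun x => d x * x ^ (2 * m) with hF
  have hF_cont : Continuous F := hd_cont.mul (continuous_pow _)
  -- Step A: unfold the density
  have stepA : ∫ x, x ^ (2 * m) ∂semicircle = ∫ x, F x := by
    rw [semicircle]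
    have hmeas : Measurable fun x : ℝ => Real.toNNReal (d x) :=
      (continuous_real_toNNReal.comp hd_cont).measurable
    rw [show (fun x : ℝ => ENNReal.ofReal (d x)) = fun x => ((Real.toNNReal (d x) : ℝ≥0) : ℝ≥0∞)
      from rfl]
    rw [integral_withDensity_eq_integral_smul hmeas]
    congr 1
    ext x
    rw [NNReal.smul_def, smul_eq_mul, Real.coe_toNNReal _ (hd_nonneg x)]
  -- Step B: restrict to [-2,2]
  have stepB : ∫ x, F x = ∫ x in (-2:ℝ)..2, F x := by
    have hind : F = Set.indicator (Set.Icc (-2:ℝ) 2) F := by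
      ext x
      by_cases hx : x ∈ Set.Icc (-2:ℝ) 2
      · rw [Set.indicator_of_mem hx]
      · rw [Set.indicator_of_notMem hx]
        rw [Set.mem_Icc, not_and_or, not_le, not_le] at hx
        have : max (4 - x ^ 2) 0 = 0 := by
          rcases hx with h | h <;> [skip; skip] <;>
            · apply max_eq_right; nlinarith
        simp [hF, hd, this]
    conv_lhs => rw [hind]
    rw [integral_indicator measurableSet_Icc, integral_Icc_eq_integral_Ioc,
      ← intervalIntegral.integral_of_le (by norm_num : (-2:ℝ) ≤ 2)]
  -- Step C: substitution x = 2 sin θ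
  have stepC : ∫ x in (-2:ℝ)..2, F x
      = ∫ θ in (-(π/2))..(π/2), (2 * Real.cos θ) • F (2 * Real.sin θ) := by
    have h := intervalIntegral.integral_comp_smul_deriv (a := -(π/2)) (b := π/2)
      (f := fun θ => 2 * Real.sin θ) (f' := fun θ => 2 * Real.cos θ) (g := F)
      (fun θ _ => (Real.hasDerivAt_sin θ).const_mul 2)
      (by fun_prop) hF_cont
    simp only [Real.sin_neg, Real.sin_pi_div_two, mul_one, mul_neg] at h
    rw [← h]
    rfl
  -- Step D: simplify the integrand
  have stepD : ∫ θ in (-(π/2))..(π/2), (2 * Real.cos θ) • F (2 * Real.sin θ)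
      = ∫ θ in (-(π/2))..(π/2),
          ((4:ℝ)^(m+1) * (2*π)⁻¹) * (Real.sin θ ^ (2*m) - Real.sin θ ^ (2*(m+1))) := by
    apply intervalIntegral.integral_congr
    intro θ hθ
    rw [Set.uIcc_of_le (by linarith [pi_pos] : -(π/2) ≤ π/2)] at hθ
    have hcos : 0 ≤ Real.cos θ := Real.cos_nonneg_of_mem_Icc hθ
    have hs : Real.sin θ ^ 2 + Real.cos θ ^ 2 = 1 := Real.sin_sq_add_cos_sq θ
    have hmax : max (4 - (2 * Real.sin θ) ^ 2) 0 = (2 * Real.cos θ) ^ 2 := by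
      rw [max_eq_left (by nlinarith)]; nlinarith
    have hsq : Real.sqrt ((2 * Real.cos θ) ^ 2) = 2 * Real.cos θ :=
      Real.sqrt_sq (by linarith)
    have h2m : (2 * Real.sin θ) ^ (2*m) = 4^m * Real.sin θ ^ (2*m) := by
      rw [mul_pow]; congr 1; rw [pow_mul]; norm_num
    have hc2 : Real.cos θ ^ 2 = 1 - Real.sin θ ^ 2 := by linarith
    simp only [smul_eq_mul, hF, hd, hmax, hsq, h2m]
    calc 2 * Real.cos θ * ((2*π)⁻¹ * (2 * Real.cos θ) * (4^m * Real.sin θ ^ (2*m)))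
        = (2*π)⁻¹ * 4^(m+1) * Real.sin θ ^ (2*m) * Real.cos θ ^ 2 := by ring
      _ = (4:ℝ)^(m+1) * (2*π)⁻¹ * (Real.sin θ ^ (2*m) - Real.sin θ ^ (2*(m+1))) := by
          rw [hc2]; ring
  -- Step E: evaluate
  have hint : ∀ n : ℕ, IntervalIntegrable (fun θ => Real.sin θ ^ (2*n)) volume (-(π/2)) (π/2) :=
    fun n => (continuous_sin.pow _).intervalIntegrable _ _
  rw [stepA, stepB, stepC, stepD, intervalIntegral.integral_const_mul,
    intervalIntegral.integral_sub (hint m) (hint (m+1)), sin_pow_sym m, sin_pow_sym (m+1)]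
  have hP1 : Pprod (m+1) = Pprod m * ((2*(m:ℝ)+1)/(2*m+2)) := by
    rw [Pprod, Finset.prod_range_succ]; rfl
  rw [hP1, ← binom_prod m]
  have hπ : π ≠ 0 := Real.pi_ne_zero
  have hm1 : ((m:ℝ)+1) ≠ 0 := by positivity
  have hm2 : (2*(m:ℝ)+2) ≠ 0 := by positivity
  field_simp
  ring
end

section
/- For Borel probability measures μ, μ₁, μ₂, … on ℝ with distribution functions F, F₁, F₂, …, the sequence μₙ converges weakly to μ if and only if the Lévy distance L(Fₙ, F) tends to 0. -/
open MeasureTheory Filter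

/-- The distribution function of a Borel measure on `ℝ`. -/
noncomputable def distFun (μ : Measure ℝ) (x : ℝ) : ℝ := (μ (Set.Iic x)).toReal

/-- The Lévy distance between two distribution functions. -/
noncomputable def levyDist (F G : ℝ → ℝ) : ℝ :=
  sInf {ε : ℝ | 0 < ε ∧ ∀ x, F (x - ε) - ε ≤ G x ∧ G x ≤ F (x + ε) + ε}

/-! Weak convergence of probability measures on `ℝ` is metrized by the Lévy–Prokhorov distance,
and testing the Lévy–Prokhorov inequalities on half-lines `Iic x` shows that the Lévy distance is
at most the Lévy–Prokhorov distance. Conversely, a small Lévy distance traps `Fₙ t` between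
`F (t - η) - η` and `F (t + η) + η`, so `Fₙ → F` at every continuity point of `F`. The intervals
`Ioc a b` with endpoints at continuity points form a π-system containing arbitrarily small
neighbourhoods of every point, and convergence on such a π-system implies weak convergence. -/

open Set ProbabilityTheory Topology

section DistributionFunction

variable (μ : Measure ℝ)

lemma distFun_eq_cdf [IsProbabilityMeasure μ] : distFun μ = cdf μ :=
  funext fun x => (cdf_eq_real μ x).symm

lemma monotone_distFun [IsProbabilityMeasure μ] : Monotone (distFun μ) :=
  distFun_eq_cdf μ ▸ monotone_cdf μ

lemma dense_setOf_continuousAt_distFun [IsProbabilityMeasure μ] :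
    Dense {x | ContinuousAt (distFun μ) x} := by
  simpa only [compl_ofPred, not_not] using
    (monotone_distFun μ).countable_not_continuousAt.dense_compl ℝ

lemma distFun_sub_distFun [IsFiniteMeasure μ] {a b : ℝ} (hab : a ≤ b) :
    distFun μ b - distFun μ a = μ.real (Ioc a b) := by
  rw [← Iic_sdiff_Iic, measureReal_sdiff (Iic_subset_Iic.2 hab) measurableSet_Iic]
  rfl

end DistributionFunction

def IsLevyBound (F G : ℝ → ℝ) (ε : ℝ) : Prop :=
  ∀ x, F (x - ε) - ε ≤ G x ∧ G x ≤ F (x + ε) + ε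

namespace IsLevyBound

variable {F G : ℝ → ℝ} {ε η : ℝ}

lemma symm (h : IsLevyBound F G ε) : IsLevyBound G F ε := fun x => by
  have hlow := (h (x - ε)).2
  have hupp := (h (x + ε)).1
  simp only [sub_add_cancel, add_sub_cancel_right] at hlow hupp
  constructor <;> linarith

lemma mono (hF : Monotone F) (h : IsLevyBound F G η) (hηε : η ≤ ε) : IsLevyBound F G ε :=
  fun x => by
    have := h x
    have := hF (show x - ε ≤ x - η by linarith)
    have := hF (show x + η ≤ x + ε by linarith)
    constructor <;> linarith

end IsLevyBound

section LevyDist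

variable {F G : ℝ → ℝ} {ε : ℝ}

lemma levyDist_nonneg (F G : ℝ → ℝ) : 0 ≤ levyDist F G :=
  Real.sInf_nonneg fun _ h => h.1.le

lemma levyDist_le (hε : 0 < ε) (h : IsLevyBound F G ε) : levyDist F G ≤ ε :=
  csInf_le ⟨0, fun _ h => h.1.le⟩ ⟨hε, h⟩

lemma IsLevyBound.of_levyDist_lt (hF : Monotone F)
    (hne : {ε | 0 < ε ∧ IsLevyBound F G ε}.Nonempty) (h : levyDist F G < ε) :
    IsLevyBound F G ε := by
  obtain ⟨η, ⟨-, hη⟩, hηε⟩ := (csInf_lt_iff ⟨0, fun _ h => h.1.le⟩ hne).1 h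
  exact hη.mono hF hηε.le

end LevyDist

lemma isLevyBound_distFun_one (μ ν : Measure ℝ) [IsProbabilityMeasure μ]
    [IsProbabilityMeasure ν] : IsLevyBound (distFun μ) (distFun ν) 1 := fun x => by
  simp only [distFun_eq_cdf]
  have := cdf_nonneg μ (x + 1)
  have := cdf_le_one μ (x - 1)
  have := cdf_nonneg ν x
  have := cdf_le_one ν x
  constructor <;> linarith

lemma isLevyBound_distFun_of_levyDist_lt {μ ν : Measure ℝ} [IsProbabilityMeasure μ]
    [IsProbabilityMeasure ν] {ε : ℝ} (h : levyDist (distFun μ) (distFun ν) < ε) :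
    IsLevyBound (distFun μ) (distFun ν) ε :=
  .of_levyDist_lt (monotone_distFun μ) ⟨1, one_pos, isLevyBound_distFun_one μ ν⟩ h

section LevyProkhorov

lemma thickening_Iic_subset (δ y : ℝ) : Metric.thickening δ (Iic y) ⊆ Iic (y + δ) := by
  intro z hz
  obtain ⟨w, hw, hzw⟩ := Metric.mem_thickening_iff.1 hz
  have := (le_abs_self (z - w)).trans_lt (Real.dist_eq z w ▸ hzw)
  exact mem_Iic.2 (by linarith [mem_Iic.1 hw])

lemma distFun_le_of_measure_le {μ ν : Measure ℝ} [IsFiniteMeasure ν] {y z ε : ℝ} (hε : 0 ≤ ε)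
    (h : μ (Iic y) ≤ ν (Iic z) + ENNReal.ofReal ε) : distFun μ y ≤ distFun ν z + ε := by
  have := ENNReal.toReal_mono (by finiteness) h
  rwa [ENNReal.toReal_add (by finiteness) ENNReal.ofReal_ne_top, ENNReal.toReal_ofReal hε] at this

lemma isLevyBound_of_levyProkhorovEDist_lt (μ ν : Measure ℝ) [IsFiniteMeasure μ]
    [IsFiniteMeasure ν] {ε : ℝ} (hε : 0 ≤ ε) (h : levyProkhorovEDist ν μ < ENNReal.ofReal ε) :
    IsLevyBound (distFun ν) (distFun μ) ε := by
  have thickening_Iic (y : ℝ) :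
      Metric.thickening (ENNReal.ofReal ε).toReal (Iic y) ⊆ Iic (y + ε) := by
    simpa only [ENNReal.toReal_ofReal hε] using thickening_Iic_subset ε y
  refine fun x => ⟨?_, ?_⟩
  · have := (left_measure_le_of_levyProkhorovEDist_lt h measurableSet_Iic).trans
      (add_le_add_left (measure_mono (thickening_Iic (x - ε))) _)
    rw [sub_add_cancel] at this
    linarith [distFun_le_of_measure_le hε this]
  · exact distFun_le_of_measure_le hε <|
      (right_measure_le_of_levyProkhorovEDist_lt h measurableSet_Iic).trans
        (add_le_add_left (measure_mono (thickening_Iic x)) _)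

lemma levyDist_le_levyProkhorovDist (μ ν : Measure ℝ) [IsFiniteMeasure μ] [IsFiniteMeasure ν] :
    levyDist (distFun ν) (distFun μ) ≤ levyProkhorovDist ν μ := by
  refine le_of_forall_gt_imp_ge_of_dense fun ε hε => ?_
  have hε₀ : 0 < ε := ENNReal.toReal_nonneg.trans_lt hε
  refine levyDist_le hε₀ (isLevyBound_of_levyProkhorovEDist_lt μ ν hε₀.le ?_)
  rwa [ENNReal.lt_ofReal_iff_toReal_lt (levyProkhorovEDist_ne_top _ _)]

end LevyProkhorov

lemma ProbabilityMeasure.tendsto_iff_forall_bounded_continuous_integral_tendsto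
    {Ω ι : Type*} [MeasurableSpace Ω] [TopologicalSpace Ω] [OpensMeasurableSpace Ω]
    {l : Filter ι} {P : ι → ProbabilityMeasure Ω} {Q : ProbabilityMeasure Ω} :
    Tendsto P l (𝓝 Q) ↔ ∀ f : Ω → ℝ, Continuous f → (∃ C, ∀ x, |f x| ≤ C) →
      Tendsto (fun i => ∫ x, f x ∂(P i : Measure Ω)) l (𝓝 (∫ x, f x ∂(Q : Measure Ω))) := by
  rw [ProbabilityMeasure.tendsto_iff_forall_integral_tendsto]
  refine ⟨fun h f hf ⟨C, hC⟩ => h (.ofNormedAddCommGroup f hf C hC), fun h f => ?_⟩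
  exact h f f.continuous ⟨‖f‖, f.norm_coe_le_norm⟩

section WeakConvergence

variable {ι : Type*} {l : Filter ι} {P : ι → ProbabilityMeasure ℝ} {Q : ProbabilityMeasure ℝ}

lemma tendsto_levyDist_of_tendsto (h : Tendsto P l (𝓝 Q)) :
    Tendsto (fun i => levyDist (distFun (P i)) (distFun Q)) l (𝓝 0) := by
  have hLP : Tendsto (fun i => levyProkhorovDist (P i : Measure ℝ) Q) l (𝓝 0) :=
    tendsto_iff_dist_tendsto_zero.1
      ((LevyProkhorov.probabilityMeasureHomeomorph.continuous.tendsto Q).comp h)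
  exact squeeze_zero (fun _ => levyDist_nonneg _ _)
    (fun i => levyDist_le_levyProkhorovDist _ _) hLP

lemma tendsto_distFun_of_tendsto_levyDist
    (h : Tendsto (fun i => levyDist (distFun (P i)) (distFun Q)) l (𝓝 0)) {t : ℝ}
    (ht : ContinuousAt (distFun Q) t) :
    Tendsto (fun i => distFun (P i) t) l (𝓝 (distFun Q t)) := by
  have hbound (η : ℝ) (hη : 0 < η) :
      ∀ᶠ i in l, IsLevyBound (distFun Q) (distFun (P i)) η :=
    (h.eventually (gt_mem_nhds hη)).mono fun i hi => (isLevyBound_distFun_of_levyDist_lt hi).symm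
  have hlow : Tendsto (fun η => distFun Q (t - η) - η) (𝓝 0) (𝓝 (distFun Q t)) := by
    have : Tendsto (fun η : ℝ => t - η) (𝓝 0) (𝓝 t) := by
      simpa using tendsto_const_nhds.sub (tendsto_id (x := 𝓝 (0 : ℝ)))
    simpa using (ht.tendsto.comp this).sub tendsto_id
  have hupp : Tendsto (fun η => distFun Q (t + η) + η) (𝓝 0) (𝓝 (distFun Q t)) := by
    have : Tendsto (fun η : ℝ => t + η) (𝓝 0) (𝓝 t) := by
      simpa using tendsto_const_nhds.add (tendsto_id (x := 𝓝 (0 : ℝ)))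
    simpa using (ht.tendsto.comp this).add tendsto_id
  refine tendsto_order.2 ⟨fun a ha => ?_, fun b hb => ?_⟩
  · obtain ⟨η, hlt, hη⟩ := ((hlow.mono_left nhdsWithin_le_nhds).eventually
      (lt_mem_nhds ha)).and self_mem_nhdsWithin |>.exists (f := 𝓝[>] 0)
    exact (hbound η hη).mono fun i hi => hlt.trans_le (hi t).1
  · obtain ⟨η, hlt, hη⟩ := ((hupp.mono_left nhdsWithin_le_nhds).eventually
      (gt_mem_nhds hb)).and self_mem_nhdsWithin |>.exists (f := 𝓝[>] 0)
    exact (hbound η hη).mono fun i hi => (hi t).2.trans_lt hlt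

lemma tendsto_of_tendsto_distFun [l.IsCountablyGenerated]
    (h : ∀ t, ContinuousAt (distFun Q) t →
      Tendsto (fun i => distFun (P i) t) l (𝓝 (distFun Q t))) :
    Tendsto P l (𝓝 Q) := by
  set D := {x | ContinuousAt (distFun Q) x}
  have hD : Dense D := dense_setOf_continuousAt_distFun Q
  refine (isPiSystem_Ioc_mem D D).tendsto_probabilityMeasure_of_tendsto_of_mem ?_ ?_ ?_
  · rintro _ ⟨a, -, b, -, -, rfl⟩
    exact measurableSet_Ioc
  · intro u hu x hx
    obtain ⟨ε, hε, hball⟩ := Metric.isOpen_iff.1 hu x hx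
    obtain ⟨a, haD, ha⟩ := hD.exists_between (show x - ε < x by linarith)
    obtain ⟨b, hbD, hb⟩ := hD.exists_between (show x < x + ε by linarith)
    refine ⟨Ioc a b, ⟨a, haD, b, hbD, ha.2.trans hb.1, rfl⟩, Ioc_mem_nhds ha.2 hb.1, ?_⟩
    refine Subset.trans (fun y hy => ?_) hball
    rw [Real.ball_eq_Ioo]
    exact ⟨ha.1.trans hy.1, hy.2.trans_lt hb.2⟩
  · rintro _ ⟨a, ha, b, hb, hab, rfl⟩
    refine NNReal.tendsto_coe.1 ?_
    simp only [← ProbabilityMeasure.measureReal_eq_coe_coeFn, ← distFun_sub_distFun _ hab.le]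
    exact (h b hb).sub (h a ha)

end WeakConvergence

theorem weak_conv_iff_levy (μ : Measure ℝ) (ν : ℕ → Measure ℝ)
    [IsProbabilityMeasure μ] [∀ n, IsProbabilityMeasure (ν n)] :
    (∀ f : ℝ → ℝ, Continuous f → (∃ C, ∀ x, |f x| ≤ C) →
        Tendsto (fun n => ∫ x, f x ∂(ν n)) atTop (nhds (∫ x, f x ∂μ))) ↔
    Tendsto (fun n => levyDist (distFun (ν n)) (distFun μ)) atTop (nhds 0) := by
  let P : ℕ → ProbabilityMeasure ℝ := fun n => ⟨ν n, inferInstance⟩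
  let Q : ProbabilityMeasure ℝ := ⟨μ, inferInstance⟩
  refine ProbabilityMeasure.tendsto_iff_forall_bounded_continuous_integral_tendsto.symm.trans
    ⟨tendsto_levyDist_of_tendsto (P := P) (Q := Q), fun h => ?_⟩
  exact tendsto_of_tendsto_distFun fun _ => tendsto_distFun_of_tendsto_levyDist (P := P) h
end

section
/- (Hoffman–Wielandt inequality) If A and B are n×n Hermitian matrices, then ∑_{i=1}^n (λᵢ(A) − λᵢ(B))² ≤ ‖A−B‖_F², where ‖·‖_F is the Frobenius norm. -/
/-!
Conjugating `A - B` by the eigenvector unitaries `U` of `A` and `V` of `B` preserves the Frobenius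
norm and yields the matrix with entries `(αᵢ - βⱼ) Wᵢⱼ`, where `W = U* V`. Hence
`‖A - B‖²_F = ∑ᵢⱼ Sᵢⱼ (αᵢ - βⱼ)²` with `Sᵢⱼ = |Wᵢⱼ|²` doubly stochastic. By Birkhoff's theorem this
linear function of `S` is bounded below by its value `∑ᵢ (αᵢ - β_{σ i})²` at some permutation
matrix, and by the rearrangement inequality that sum is smallest when both eigenvalue sequences
are sorted the same way.
-/

open Matrix Finset

theorem Monovary.sum_sub_sq_le_sum_sub_comp_perm_sq {ι R : Type*} [Fintype ι] [CommRing R]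
    [LinearOrder R] [IsStrictOrderedRing R] {f g : ι → R} (hfg : Monovary f g)
    (σ : Equiv.Perm ι) : ∑ i, (f i - g i) ^ 2 ≤ ∑ i, (f i - g (σ i)) ^ 2 := by
  have hsq : ∑ i, g (σ i) ^ 2 = ∑ i, g i ^ 2 := Equiv.sum_comp σ (g · ^ 2)
  have hcross : ∑ i, f i * g (σ i) ≤ ∑ i, f i * g i := hfg.sum_mul_comp_perm_le_sum_mul
  simp only [sub_sq, sum_add_distrib, sum_sub_distrib, mul_assoc, ← mul_sum]
  linarith

theorem exists_perm_sum_le_of_mem_doublyStochastic {ι R : Type*} [Fintype ι] [DecidableEq ι]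
    [Field R] [LinearOrder R] [IsStrictOrderedRing R] {S : Matrix ι ι R}
    (hS : S ∈ doublyStochastic R ι) (c : ι → ι → R) :
    ∃ σ : Equiv.Perm ι, ∑ i, c i (σ i) ≤ ∑ i, ∑ j, S i j * c i j := by
  let pairing : Matrix ι ι R →ₗ[R] R :=
    { toFun := fun M ↦ ∑ i, ∑ j, M i j * c i j
      map_add' := fun M N ↦ by simp only [Matrix.add_apply, add_mul, sum_add_distrib]
      map_smul' := fun r M ↦ by simp only [Matrix.smul_apply, smul_eq_mul, mul_sum, mul_assoc,
        RingHom.id_apply] }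
  rw [← SetLike.mem_coe, doublyStochastic_eq_convexHull_permMatrix] at hS
  obtain ⟨_, ⟨σ, rfl⟩, hσ⟩ :=
    (pairing.concaveOn convex_univ).exists_le_of_mem_convexHull (Set.subset_univ _) hS
  refine ⟨σ, le_of_eq_of_le ?_ hσ⟩
  simp [pairing, Equiv.Perm.permMatrix, PEquiv.toMatrix_apply]

theorem Matrix.sum_norm_sq_eq_re_trace {𝕜 ι κ : Type*} [RCLike 𝕜] [Fintype ι] [Fintype κ]
    (M : Matrix ι κ 𝕜) :
    ∑ i, ∑ j, ‖M i j‖ ^ 2 = RCLike.re (Mᴴ * M).trace := by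
  simp only [trace, diag, mul_apply, conjTranspose_apply, RCLike.star_def, RCLike.conj_mul]
  rw [sum_comm]
  norm_cast

section RCLike

variable {𝕜 ι : Type*} [RCLike 𝕜] [Fintype ι] [DecidableEq ι]

theorem Matrix.norm_sq_mem_doublyStochastic_of_mem_unitaryGroup {U : Matrix ι ι 𝕜}
    (hU : U ∈ unitaryGroup ι 𝕜) :
    (fun i j ↦ ‖U i j‖ ^ 2 : Matrix ι ι ℝ) ∈ doublyStochastic ℝ ι := by
  refine mem_doublyStochastic_iff_sum.mpr ⟨fun _ _ ↦ by positivity, fun i ↦ ?_, fun j ↦ ?_⟩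
  · have h := congr_fun₂ (mem_unitaryGroup_iff.mp hU) i i
    simp only [mul_apply, star_apply, RCLike.star_def, RCLike.mul_conj, one_apply_eq] at h
    exact_mod_cast h
  · have h := congr_fun₂ (mem_unitaryGroup_iff'.mp hU) j j
    simp only [mul_apply, star_apply, RCLike.star_def, RCLike.conj_mul, one_apply_eq] at h
    exact_mod_cast h

theorem Matrix.sum_norm_sq_unitary_mul_mul_unitary {U V : Matrix ι ι 𝕜}
    (hU : U ∈ unitaryGroup ι 𝕜) (hV : V ∈ unitaryGroup ι 𝕜) (M : Matrix ι ι 𝕜) :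
    ∑ i, ∑ j, ‖(U * M * V) i j‖ ^ 2 = ∑ i, ∑ j, ‖M i j‖ ^ 2 := by
  have hUU : Uᴴ * U = 1 := mem_unitaryGroup_iff'.mp hU
  have hVV : V * Vᴴ = 1 := mem_unitaryGroup_iff.mp hV
  rw [sum_norm_sq_eq_re_trace, sum_norm_sq_eq_re_trace, conjTranspose_mul, conjTranspose_mul]
  have h : Vᴴ * (Mᴴ * Uᴴ) * (U * M * V) = Vᴴ * (Mᴴ * M) * V := by
    simp only [Matrix.mul_assoc, ← Matrix.mul_assoc Uᴴ U, hUU, Matrix.one_mul]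
  rw [h, trace_mul_cycle, hVV, Matrix.one_mul]

theorem Matrix.IsHermitian.star_eigenvectorUnitary_mul {A : Matrix ι ι 𝕜} (hA : A.IsHermitian) :
    star (hA.eigenvectorUnitary : Matrix ι ι 𝕜) * A =
      diagonal (RCLike.ofReal ∘ hA.eigenvalues) * star (hA.eigenvectorUnitary : Matrix ι ι 𝕜) := by
  conv_lhs => arg 2; rw [hA.spectral_theorem, Unitary.conjStarAlgAut_apply]
  simp only [← Matrix.mul_assoc, Unitary.coe_star_mul_self, Matrix.one_mul]

theorem Matrix.IsHermitian.mul_eigenvectorUnitary {A : Matrix ι ι 𝕜} (hA : A.IsHermitian) :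
    A * (hA.eigenvectorUnitary : Matrix ι ι 𝕜) =
      (hA.eigenvectorUnitary : Matrix ι ι 𝕜) * diagonal (RCLike.ofReal ∘ hA.eigenvalues) := by
  conv_lhs => arg 1; rw [hA.spectral_theorem, Unitary.conjStarAlgAut_apply]
  simp only [Matrix.mul_assoc, Unitary.coe_star_mul_self, Matrix.mul_one]

theorem Matrix.IsHermitian.sum_norm_sq_sub_eq {A B : Matrix ι ι 𝕜} (hA : A.IsHermitian)
    (hB : B.IsHermitian) :
    ∑ i, ∑ j, ‖(A - B) i j‖ ^ 2 =
      ∑ i, ∑ j,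
        ‖(star (hA.eigenvectorUnitary : Matrix ι ι 𝕜) * hB.eigenvectorUnitary) i j‖ ^ 2 *
          (hA.eigenvalues i - hB.eigenvalues j) ^ 2 := by
  set U : Matrix ι ι 𝕜 := ↑hA.eigenvectorUnitary
  set V : Matrix ι ι 𝕜 := ↑hB.eigenvectorUnitary
  have hconj : star U * (A - B) * V = diagonal (RCLike.ofReal ∘ hA.eigenvalues) * (star U * V) -
      star U * V * diagonal (RCLike.ofReal ∘ hB.eigenvalues) := by
    rw [Matrix.mul_sub, Matrix.sub_mul, hA.star_eigenvectorUnitary_mul, Matrix.mul_assoc (star U) B,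
      hB.mul_eigenvectorUnitary, Matrix.mul_assoc, Matrix.mul_assoc]
  rw [← sum_norm_sq_unitary_mul_mul_unitary (Unitary.star_mem hA.eigenvectorUnitary.2)
    hB.eigenvectorUnitary.2, hconj]
  refine sum_congr rfl fun i _ ↦ sum_congr rfl fun j _ ↦ ?_
  rw [sub_apply, diagonal_mul, mul_diagonal, Function.comp_apply, Function.comp_apply,
    mul_comm (hA.eigenvalues i : 𝕜), ← mul_sub, ← RCLike.ofReal_sub, norm_mul, RCLike.norm_ofReal,
    mul_pow, sq_abs]

end RCLike

theorem hoffman_wielandt {n : ℕ} (A B : Matrix (Fin n) (Fin n) ℂ)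
    (hA : A.IsHermitian) (hB : B.IsHermitian)
    (lamA : Fin n → ℝ) (hmonoA : Antitone lamA)
    (hpermA : ∃ σ : Equiv.Perm (Fin n), lamA = hA.eigenvalues ∘ σ)
    (lamB : Fin n → ℝ) (hmonoB : Antitone lamB)
    (hpermB : ∃ σ : Equiv.Perm (Fin n), lamB = hB.eigenvalues ∘ σ) :
    ∑ i, (lamA i - lamB i) ^ 2 ≤ ∑ i, ∑ j, ‖(A - B) i j‖ ^ 2 := by
  obtain ⟨σA, rfl⟩ := hpermA
  obtain ⟨σB, rfl⟩ := hpermB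
  set α := hA.eigenvalues
  set β := hB.eigenvalues
  obtain ⟨σ, hσ⟩ := exists_perm_sum_le_of_mem_doublyStochastic
    (norm_sq_mem_doublyStochastic_of_mem_unitaryGroup
      (mul_mem (Unitary.star_mem hA.eigenvectorUnitary.2) hB.eigenvectorUnitary.2))
    fun i j ↦ (α i - β j) ^ 2
  rw [hA.sum_norm_sq_sub_eq hB]
  calc ∑ i, (α (σA i) - β (σB i)) ^ 2
      ≤ ∑ i, (α (σA i) - β (σB ((σB⁻¹ * σ * σA) i))) ^ 2 :=
        (hmonoA.monovary hmonoB).sum_sub_sq_le_sum_sub_comp_perm_sq _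
    _ = ∑ i, (α i - β (σ i)) ^ 2 := by
        simp only [Equiv.Perm.mul_apply, Equiv.Perm.inv_def, Equiv.apply_symm_apply]
        exact Equiv.sum_comp σA fun i ↦ (α i - β (σ i)) ^ 2
    _ ≤ _ := hσ
end

section
/- (Rank inequality) If A and B are n×n Hermitian matrices, then sup_{x∈ℝ} |F_A(x) − F_B(x)| ≤ rank(A − B)/n. -/
open Matrix Finset

/-- Distribution function of the empirical spectral distribution of a Hermitian matrix. -/
noncomputable def specDistFun {n : ℕ} {A : Matrix (Fin n) (Fin n) ℂ}
    (hA : A.IsHermitian) (x : ℝ) : ℝ :=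
  ((Finset.univ.filter fun i => hA.eigenvalues i ≤ x).card : ℝ) / n

/-!
A dimension count in the spirit of Courant–Fischer. Let `U` be spanned by the eigenvectors of `A`
with eigenvalue `≤ x`, `W` by those of `B` with eigenvalue `> x`, and `K = ker (A - B)`. If
`#{λ(A) ≤ x}` exceeded `#{λ(B) ≤ x} + rank (A - B)`, then `dim U + dim W + dim K > 2n`, so the
three subspaces share some `v ≠ 0`; but then `⟪v, A v⟫ ≤ x ‖v‖² < ⟪v, B v⟫ = ⟪v, A v⟫`.
Exchanging `A` and `B` gives the other half of the bound.
-/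

open Module Submodule

theorem Module.Basis.finrank_span_image_finset {K V ι : Type*} [DivisionRing K] [AddCommGroup V]
    [Module K V] (b : Basis ι K V) (s : Finset ι) : finrank K (span K (b '' s)) = s.card := by
  rw [Set.image_eq_range, ← Fintype.card_coe s]
  exact finrank_span_eq_card (b.linearIndependent.comp _ Subtype.coe_injective)

theorem Submodule.inf_inf_ne_bot_of_lt_finrank_add {K V : Type*} [DivisionRing K] [AddCommGroup V]
    [Module K V] [FiniteDimensional K V] {U W X : Submodule K V}
    (h : 2 * finrank K V < finrank K U + finrank K W + finrank K X) : U ⊓ W ⊓ X ≠ ⊥ := by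
  have hUW := finrank_sup_add_finrank_inf_eq U W
  have hUWX := finrank_sup_add_finrank_inf_eq (U ⊓ W) X
  have := (U ⊔ W).finrank_le
  have := (U ⊓ W ⊔ X).finrank_le
  intro hbot
  rw [hbot, finrank_bot] at hUWX
  omega

theorem OrthonormalBasis.repr_eq_zero_of_mem_span {𝕜 E ι : Type*} [RCLike 𝕜]
    [NormedAddCommGroup E] [InnerProductSpace 𝕜 E] [Fintype ι] (b : OrthonormalBasis ι 𝕜 E)
    {s : Set ι} {v : E} (hv : v ∈ span 𝕜 (b '' s)) {i : ι} (hi : i ∉ s) : b.repr v i = 0 := by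
  rw [← b.coe_toBasis, b.toBasis.mem_span_image] at hv
  rw [← b.coe_toBasis_repr_apply]
  exact Finsupp.notMem_support_iff.1 fun h => hi (hv h)

section Eigenbasis

variable {𝕜 E ι : Type*} [RCLike 𝕜] [NormedAddCommGroup E] [InnerProductSpace 𝕜 E] [Fintype ι]
  {T : E →ₗ[𝕜] E} {b : OrthonormalBasis ι 𝕜 E} {μ : ι → ℝ}

theorem OrthonormalBasis.repr_apply_eq_mul_of_apply_eq_smul
    (hb : ∀ i, T (b i) = (μ i : 𝕜) • b i) (v : E) (i : ι) : b.repr (T v) i = μ i * b.repr v i := by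
  classical
  conv_lhs => rw [← b.sum_repr v]
  simp [hb, Pi.single_apply, RCLike.real_smul_eq_coe_mul, mul_comm]

theorem re_inner_self_apply_eq_sum (hb : ∀ i, T (b i) = (μ i : 𝕜) • b i) (v : E) :
    RCLike.re (inner 𝕜 v (T v)) = ∑ i, μ i * ‖b.repr v i‖ ^ 2 := by
  rw [← b.repr.inner_map_map, PiLp.inner_apply, map_sum]
  refine sum_congr rfl fun i _ => ?_
  rw [b.repr_apply_eq_mul_of_apply_eq_smul hb, RCLike.inner_apply, mul_assoc, RCLike.mul_conj]
  norm_cast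

theorem re_inner_self_apply_le_of_mem_span (hb : ∀ i, T (b i) = (μ i : 𝕜) • b i) {s : Set ι}
    {x : ℝ} (hs : ∀ i ∈ s, μ i ≤ x) {v : E} (hv : v ∈ span 𝕜 (b '' s)) :
    RCLike.re (inner 𝕜 v (T v)) ≤ x * ‖v‖ ^ 2 := by
  rw [re_inner_self_apply_eq_sum hb, ← b.repr.norm_map v, EuclideanSpace.norm_sq_eq, mul_sum]
  refine sum_le_sum fun i _ => ?_
  by_cases hi : i ∈ s
  · exact mul_le_mul_of_nonneg_right (hs i hi) (sq_nonneg _)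
  · simp [b.repr_eq_zero_of_mem_span hv hi]

theorem lt_re_inner_self_apply_of_mem_span (hb : ∀ i, T (b i) = (μ i : 𝕜) • b i) {s : Set ι}
    {x : ℝ} (hs : ∀ i ∈ s, x < μ i) {v : E} (hv : v ∈ span 𝕜 (b '' s)) (hv0 : v ≠ 0) :
    x * ‖v‖ ^ 2 < RCLike.re (inner 𝕜 v (T v)) := by
  rw [re_inner_self_apply_eq_sum hb, ← b.repr.norm_map v, EuclideanSpace.norm_sq_eq, mul_sum]
  obtain ⟨j, hj⟩ : ∃ j, b.repr v j ≠ 0 := by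
    by_contra! h
    exact hv0 (b.repr.map_eq_zero_iff.1 (PiLp.ext h))
  have hjs : j ∈ s := by_contra fun hjs => hj (b.repr_eq_zero_of_mem_span hv hjs)
  refine sum_lt_sum (fun i _ => ?_) ⟨j, mem_univ j, ?_⟩
  · by_cases hi : i ∈ s
    · exact mul_le_mul_of_nonneg_right (hs i hi).le (sq_nonneg _)
    · simp [b.repr_eq_zero_of_mem_span hv hi]
  · exact mul_lt_mul_of_pos_right (hs j hjs) (by positivity)

end Eigenbasis

theorem card_eigenvalues_le_le_add_finrank_range_sub {𝕜 E ι ι' : Type*} [RCLike 𝕜]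
    [NormedAddCommGroup E] [InnerProductSpace 𝕜 E] [FiniteDimensional 𝕜 E] [Fintype ι]
    [Fintype ι'] {T S : E →ₗ[𝕜] E} {b : OrthonormalBasis ι 𝕜 E} {c : OrthonormalBasis ι' 𝕜 E}
    {μ : ι → ℝ} {ν : ι' → ℝ} (hb : ∀ i, T (b i) = (μ i : 𝕜) • b i)
    (hc : ∀ j, S (c j) = (ν j : 𝕜) • c j) (x : ℝ) :
    #{i | μ i ≤ x} ≤ #{j | ν j ≤ x} + finrank 𝕜 (LinearMap.range (T - S)) := by
  set U := span 𝕜 (b '' ↑({i | μ i ≤ x} : Finset ι))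
  set W := span 𝕜 (c '' ↑({j | x < ν j} : Finset ι'))
  have hU : finrank 𝕜 U = #{i | μ i ≤ x} := b.toBasis.finrank_span_image_finset _
  have hW : finrank 𝕜 W = #{j | x < ν j} := c.toBasis.finrank_span_image_finset _
  have hcard : #{j | x < ν j} + #{j | ν j ≤ x} = finrank 𝕜 E := by
    rw [finrank_eq_card_basis c.toBasis]
    simpa using card_filter_add_card_filter_not (s := univ) (fun j => x < ν j)
  have hrank := (T - S).finrank_range_add_finrank_ker
  by_contra! hlt
  obtain ⟨v, ⟨⟨hvU, hvW⟩, hvker⟩, hv0⟩ := exists_mem_ne_zero_of_ne_bot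
    (inf_inf_ne_bot_of_lt_finrank_add (U := U) (W := W) (X := LinearMap.ker (T - S)) (by omega))
  have hTS : T v = S v := sub_eq_zero.1 hvker
  have hle := re_inner_self_apply_le_of_mem_span hb (fun i hi => by simpa using hi) hvU
  have hlt := lt_re_inner_self_apply_of_mem_span hc (fun j hj => by simpa using hj) hvW hv0
  rw [hTS] at hle
  linarith

namespace Matrix

theorem rank_neg {m n R : Type*} [Fintype n] [CommRing R] (M : Matrix m n R) :
    (-M).rank = M.rank := by
  have : (-M).mulVecLin = -M.mulVecLin := LinearMap.ext fun v => neg_mulVec v M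
  rw [rank, rank, this, LinearMap.range_neg]

theorem finrank_range_toLpLin {m n R : Type*} [Fintype m] [Fintype n] [DecidableEq n] [CommRing R]
    (p q : ENNReal) (M : Matrix m n R) :
    finrank R (LinearMap.range (toLpLin p q M)) = M.rank := by
  rw [toLpLin_eq_toLin]
  exact (M.rank_eq_finrank_range_toLin _ _).symm

namespace IsHermitian

variable {𝕜 n : Type*} [RCLike 𝕜] [Fintype n] [DecidableEq n] {A B : Matrix n n 𝕜}

theorem toEuclideanLin_eigenvectorBasis (hA : A.IsHermitian) (i : n) :
    toEuclideanLin A (hA.eigenvectorBasis i) = (hA.eigenvalues i : 𝕜) • hA.eigenvectorBasis i := by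
  rw [toLpLin_apply, hA.mulVec_eigenvectorBasis, RCLike.real_smul_eq_coe_smul (K := 𝕜),
    WithLp.toLp_smul, WithLp.toLp_ofLp]

theorem card_eigenvalues_le_le_add_rank_sub (hA : A.IsHermitian) (hB : B.IsHermitian) (x : ℝ) :
    #{i | hA.eigenvalues i ≤ x} ≤ #{i | hB.eigenvalues i ≤ x} + (A - B).rank := by
  rw [← finrank_range_toLpLin 2 2, map_sub]
  exact card_eigenvalues_le_le_add_finrank_range_sub hA.toEuclideanLin_eigenvectorBasis
    hB.toEuclideanLin_eigenvectorBasis x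

end IsHermitian

end Matrix

theorem rank_inequality {n : ℕ} (A B : Matrix (Fin n) (Fin n) ℂ)
    (hA : A.IsHermitian) (hB : B.IsHermitian) :
    ∀ x : ℝ, |specDistFun hA x - specDistFun hB x| ≤ ((A - B).rank : ℝ) / n := by
  intro x
  have hAB : (#{i | hA.eigenvalues i ≤ x} : ℝ) ≤ #{i | hB.eigenvalues i ≤ x} + (A - B).rank := by
    exact_mod_cast hA.card_eigenvalues_le_le_add_rank_sub hB x
  have hBA : (#{i | hB.eigenvalues i ≤ x} : ℝ) ≤ #{i | hA.eigenvalues i ≤ x} + (A - B).rank := by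
    rw [← neg_sub, rank_neg]
    exact_mod_cast hB.card_eigenvalues_le_le_add_rank_sub hA x
  rw [specDistFun, specDistFun, ← sub_div, abs_div, Nat.abs_cast]
  exact div_le_div_of_nonneg_right (abs_sub_le_iff.2 ⟨by linarith, by linarith⟩) n.cast_nonneg
end

section
/- If A and B are n×n Hermitian matrices and f : ℝ → ℝ has total variation at most 1, then |∫ f dμ_A − ∫ f dμ_B| ≤ rank(A−B)/n. -/
/-!
Write `N_A(t)` for the number of eigenvalues of `A` that are `≤ t`. The span of the eigenvectors
of `A` with eigenvalue `≤ t` and the span of the eigenvectors of `B` with eigenvalue `> t` meet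
`ker (A - B)` only in `0`, since on a common nonzero vector `v` we would have
`re ⟪v, A v⟫ ≤ t ‖v‖² < re ⟪v, B v⟫ = re ⟪v, A v⟫`. A dimension count then gives
`|N_A(t) - N_B(t)| ≤ rank (A - B)` for all `t`.

On a grid `c₀ < ⋯ < c_m` containing all eigenvalues, `f (c_k)` is `f c₀` plus the increments of `f`
over the steps below `c_k`; summing over the eigenvalues (summation by parts) gives
`∑ f (λᵢ A) - ∑ f (λᵢ B) = ∑ⱼ (f c_{j+1} - f c_j) (N_B(c_j) - N_A(c_j))`, which is at most
`rank (A - B)` times the total variation of `f`.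
-/

open Matrix Finset

section Counting

variable {ι : Type*} [Fintype ι]

noncomputable def countLE (a : ι → ℝ) (t : ℝ) : ℕ := #{i | a i ≤ t}

theorem card_lt_add_countLE (a : ι → ℝ) (t : ℝ) :
    #{i | t < a i} + countLE a t = Fintype.card ι := by
  simp_rw [countLE, ← not_le]
  rw [add_comm, card_filter_add_card_filter_not, card_univ]

theorem Fin.sum_ite_castSucc_lt_sub {m : ℕ} (g : Fin (m + 1) → ℝ) (k : Fin (m + 1)) :
    ∑ j : Fin m, (if j.castSucc < k then g j.succ - g j.castSucc else 0) = g k - g 0 := by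
  induction k using Fin.induction with
  | zero => simp
  | succ k ih =>
    have hsplit : ∀ j : Fin m, (if j.castSucc < k.succ then g j.succ - g j.castSucc else 0) =
        (if j.castSucc < k.castSucc then g j.succ - g j.castSucc else 0) +
          (if j = k then g j.succ - g j.castSucc else 0) := by
      intro j
      simp only [Fin.castSucc_lt_succ_iff, Fin.castSucc_lt_castSucc_iff]
      rcases lt_trichotomy j k with h | rfl | h
      · simp [h.le, h, h.ne]
      · simp
      · simp [h.not_ge, h.not_gt, h.ne']
    simp only [hsplit, sum_add_distrib, ih, sum_ite_eq', mem_univ, if_true]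
    ring

theorem StrictMono.eq_add_sum_ite_lt {m : ℕ} {c : Fin (m + 1) → ℝ} (hc : StrictMono c)
    (f : ℝ → ℝ) (k : Fin (m + 1)) :
    f (c k) = f (c 0) +
      ∑ j : Fin m, if c j.castSucc < c k then f (c j.succ) - f (c j.castSucc) else 0 := by
  simp only [hc.lt_iff_lt, Fin.sum_ite_castSucc_lt_sub fun j => f (c j)]
  ring

theorem sum_comp_eq_add_sum_mul_card {m : ℕ} {c : Fin (m + 1) → ℝ}
    (hc : StrictMono c) (f : ℝ → ℝ) {a : ι → ℝ} (ha : ∀ i, a i ∈ Set.range c) :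
    ∑ i, f (a i) = Fintype.card ι * f (c 0) +
      ∑ j : Fin m, (f (c j.succ) - f (c j.castSucc)) * #{i | c j.castSucc < a i} := by
  have hdecomp : ∀ i, f (a i) = f (c 0) +
      ∑ j : Fin m, if c j.castSucc < a i then f (c j.succ) - f (c j.castSucc) else 0 := by
    intro i
    obtain ⟨k, hk⟩ := ha i
    rw [← hk, hc.eq_add_sum_ite_lt f k]
  rw [sum_congr rfl fun i _ => hdecomp i, sum_add_distrib, sum_comm]
  simp only [← sum_filter, sum_const, card_univ, nsmul_eq_mul, mul_comm]

theorem abs_sum_comp_sub_sum_comp_le {a b : ι → ℝ} {r V : ℝ}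
    (hab : ∀ t, |(countLE a t : ℝ) - countLE b t| ≤ r) {f : ℝ → ℝ}
    (hf : ∀ (m : ℕ) (t : Fin (m + 1) → ℝ), StrictMono t →
      ∑ i : Fin m, |f (t i.succ) - f (t i.castSucc)| ≤ V) :
    |∑ i, f (a i) - ∑ i, f (b i)| ≤ V * r := by
  classical
  -- `0` is inserted only to make the grid nonempty.
  set s : Finset ℝ := insert 0 (univ.image a ∪ univ.image b)
  obtain ⟨m, hm⟩ : ∃ m, #s = m + 1 :=
    Nat.exists_eq_add_one.2 (card_pos.2 (insert_nonempty _ _))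
  set c := s.orderEmbOfFin hm
  have hrange : ∀ x ∈ s, x ∈ Set.range c := fun x hx => by
    rwa [range_orderEmbOfFin]
  have hcount : ∀ (d : ι → ℝ) (x : ℝ), (#{i | x < d i} : ℝ) = Fintype.card ι - countLE d x := by
    intro d x
    rw [eq_sub_iff_add_eq, ← Nat.cast_add, card_lt_add_countLE]
  have hdiff : ∑ i, f (a i) - ∑ i, f (b i) = ∑ j : Fin m, (f (c j.succ) - f (c j.castSucc)) *
      (countLE b (c j.castSucc) - countLE a (c j.castSucc)) := by
    rw [sum_comp_eq_add_sum_mul_card c.strictMono f (fun i => hrange _ (by simp [s])),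
      sum_comp_eq_add_sum_mul_card c.strictMono f (fun i => hrange _ (by simp [s])),
      add_sub_add_left_eq_sub, ← sum_sub_distrib]
    simp only [hcount]
    congr 1; ext j; ring
  have hr : 0 ≤ r := (abs_nonneg _).trans (hab 0)
  calc |∑ i, f (a i) - ∑ i, f (b i)|
      ≤ ∑ j : Fin m, |f (c j.succ) - f (c j.castSucc)| * r := by
        rw [hdiff]
        refine (abs_sum_le_sum_abs _ _).trans (sum_le_sum fun j _ => ?_)
        rw [abs_mul, abs_sub_comm (countLE b _ : ℝ)]
        exact mul_le_mul_of_nonneg_left (hab _) (abs_nonneg _)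
    _ ≤ V * r := by
        rw [← sum_mul]
        exact mul_le_mul_of_nonneg_right (hf m c c.strictMono) hr

end Counting

section Spectral

open Module RCLike InnerProductSpace

variable {𝕜 E ι : Type*} [RCLike 𝕜] [NormedAddCommGroup E] [InnerProductSpace 𝕜 E] [Fintype ι]

theorem OrthonormalBasis.repr_apply_of_apply_eq_smul (b : OrthonormalBasis ι 𝕜 E)
    {T : E →ₗ[𝕜] E} {ev : ι → ℝ} (hT : ∀ i, T (b i) = (ev i : 𝕜) • b i) (v : E) (i : ι) :
    b.repr (T v) i = ev i * b.repr v i := by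
  classical
  conv_lhs => rw [← b.sum_repr v]
  simp [hT, smul_smul, Pi.single_apply, mul_comm]

theorem OrthonormalBasis.re_inner_apply_eq_sum (b : OrthonormalBasis ι 𝕜 E)
    {T : E →ₗ[𝕜] E} {ev : ι → ℝ} (hT : ∀ i, T (b i) = (ev i : 𝕜) • b i) (v : E) :
    re ⟪v, T v⟫_𝕜 = ∑ i, ev i * ‖b.repr v i‖ ^ 2 := by
  rw [← b.repr.inner_map_map, PiLp.inner_apply, map_sum]
  refine sum_congr rfl fun i _ => ?_
  rw [b.repr_apply_of_apply_eq_smul hT, RCLike.inner_apply, mul_assoc, RCLike.mul_conj]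
  rw [← ofReal_pow, ← ofReal_mul, ofReal_re]

theorem OrthonormalBasis.repr_apply_eq_zero_of_mem_span_image (b : OrthonormalBasis ι 𝕜 E)
    {s : Set ι} {v : E} (hv : v ∈ Submodule.span 𝕜 (b '' s)) {i : ι} (hi : i ∉ s) :
    b.repr v i = 0 := by
  rw [← b.coe_toBasis, Basis.mem_span_image] at hv
  rw [← b.coe_toBasis_repr_apply]
  exact Finsupp.notMem_support_iff.1 fun h => hi (hv h)

theorem OrthonormalBasis.re_inner_apply_le_of_mem_span_image (b : OrthonormalBasis ι 𝕜 E)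
    {T : E →ₗ[𝕜] E} {ev : ι → ℝ} (hT : ∀ i, T (b i) = (ev i : 𝕜) • b i)
    {s : Set ι} {t : ℝ} (hs : ∀ i ∈ s, ev i ≤ t) {v : E} (hv : v ∈ Submodule.span 𝕜 (b '' s)) :
    re ⟪v, T v⟫_𝕜 ≤ t * ‖v‖ ^ 2 := by
  rw [b.re_inner_apply_eq_sum hT, ← b.repr.norm_map, EuclideanSpace.norm_sq_eq, mul_sum]
  refine sum_le_sum fun i _ => ?_
  by_cases hi : i ∈ s
  · exact mul_le_mul_of_nonneg_right (hs i hi) (sq_nonneg _)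
  · simp [b.repr_apply_eq_zero_of_mem_span_image hv hi]

theorem OrthonormalBasis.lt_re_inner_apply_of_mem_span_image (b : OrthonormalBasis ι 𝕜 E)
    {T : E →ₗ[𝕜] E} {ev : ι → ℝ} (hT : ∀ i, T (b i) = (ev i : 𝕜) • b i)
    {s : Set ι} {t : ℝ} (hs : ∀ i ∈ s, t < ev i) {v : E} (hv : v ∈ Submodule.span 𝕜 (b '' s))
    (hv₀ : v ≠ 0) :
    t * ‖v‖ ^ 2 < re ⟪v, T v⟫_𝕜 := by
  rw [b.re_inner_apply_eq_sum hT, ← b.repr.norm_map, EuclideanSpace.norm_sq_eq, mul_sum]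
  obtain ⟨i₀, hi₀⟩ : ∃ i, b.repr v i ≠ 0 := by
    by_contra! h
    exact hv₀ (b.repr.map_eq_zero_iff.1 (PiLp.ext h))
  have hs₀ : i₀ ∈ s := by
    by_contra h
    exact hi₀ (b.repr_apply_eq_zero_of_mem_span_image hv h)
  refine sum_lt_sum (fun i _ => ?_) ⟨i₀, mem_univ _, ?_⟩
  · by_cases hi : i ∈ s
    · exact mul_le_mul_of_nonneg_right (hs i hi).le (sq_nonneg _)
    · simp [b.repr_apply_eq_zero_of_mem_span_image hv hi]
  · exact mul_lt_mul_of_pos_right (hs i₀ hs₀) (by positivity)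

theorem OrthonormalBasis.finrank_span_image (b : OrthonormalBasis ι 𝕜 E) (s : Finset ι) :
    finrank 𝕜 (Submodule.span 𝕜 (b '' s)) = #s := by
  rw [Set.image_eq_range]
  exact (finrank_span_eq_card (b.orthonormal.linearIndependent.comp _ Subtype.val_injective)).trans
    (Fintype.card_coe s)

theorem finrank_inf_le_finrank_range_sub [FiniteDimensional 𝕜 E] {S W : Submodule 𝕜 E}
    {T U : E →ₗ[𝕜] E} {t : ℝ} (hS : ∀ v ∈ S, re ⟪v, T v⟫_𝕜 ≤ t * ‖v‖ ^ 2)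
    (hW : ∀ v ∈ W, v ≠ 0 → t * ‖v‖ ^ 2 < re ⟪v, U v⟫_𝕜) :
    finrank 𝕜 ↥(S ⊓ W) ≤ finrank 𝕜 (LinearMap.range (T - U)) := by
  have hinj : Function.Injective ((T - U).domRestrict (S ⊓ W)) := by
    rw [← LinearMap.ker_eq_bot, LinearMap.ker_eq_bot']
    rintro ⟨v, hvS, hvW⟩ hv
    have hTU : T v = U v := sub_eq_zero.1 hv
    by_contra hv₀
    have hle := hS v hvS
    have hlt := hW v hvW fun h => hv₀ (by simp [h])
    rw [hTU] at hle
    linarith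
  rw [← LinearMap.finrank_range_of_inj hinj]
  exact Submodule.finrank_mono (LinearMap.range_domRestrict_le_range _ _)

theorem countLE_le_countLE_add_finrank_range_sub [FiniteDimensional 𝕜 E] {κ : Type*}
    [Fintype κ] (b : OrthonormalBasis ι 𝕜 E) (b' : OrthonormalBasis κ 𝕜 E) {T U : E →ₗ[𝕜] E}
    {ev : ι → ℝ} {ev' : κ → ℝ} (hT : ∀ i, T (b i) = (ev i : 𝕜) • b i)
    (hU : ∀ j, U (b' j) = (ev' j : 𝕜) • b' j) (t : ℝ) :
    countLE ev t ≤ countLE ev' t + finrank 𝕜 (LinearMap.range (T - U)) := by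
  classical
  set S := Submodule.span 𝕜 (b '' ↑({i | ev i ≤ t} : Finset ι))
  set W := Submodule.span 𝕜 (b' '' ↑({j | t < ev' j} : Finset κ))
  have hSW : finrank 𝕜 ↥(S ⊓ W) ≤ finrank 𝕜 (LinearMap.range (T - U)) :=
    finrank_inf_le_finrank_range_sub (t := t)
      (fun v hv => b.re_inner_apply_le_of_mem_span_image hT (by simp) hv)
      (fun v hv => b'.lt_re_inner_apply_of_mem_span_image hU (by simp) hv)
  have hsup : finrank 𝕜 ↥(S ⊔ W) ≤ Fintype.card κ :=
    (Submodule.finrank_le _).trans_eq (finrank_eq_card_basis b'.toBasis)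
  have hS : finrank 𝕜 S = countLE ev t := b.finrank_span_image _
  have hW : finrank 𝕜 W + countLE ev' t = Fintype.card κ := by
    rw [b'.finrank_span_image, card_lt_add_countLE]
  have := Submodule.finrank_sup_add_finrank_inf_eq S W
  omega

theorem abs_countLE_sub_countLE_le_finrank_range_sub [FiniteDimensional 𝕜 E] {κ : Type*}
    [Fintype κ] (b : OrthonormalBasis ι 𝕜 E) (b' : OrthonormalBasis κ 𝕜 E) {T U : E →ₗ[𝕜] E}
    {ev : ι → ℝ} {ev' : κ → ℝ} (hT : ∀ i, T (b i) = (ev i : 𝕜) • b i)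
    (hU : ∀ j, U (b' j) = (ev' j : 𝕜) • b' j) (t : ℝ) :
    |(countLE ev t : ℝ) - countLE ev' t| ≤ finrank 𝕜 (LinearMap.range (T - U)) := by
  have h₁ := countLE_le_countLE_add_finrank_range_sub b b' hT hU t
  have h₂ := countLE_le_countLE_add_finrank_range_sub b' b hU hT t
  rw [← neg_sub, LinearMap.range_neg] at h₂
  rw [abs_sub_le_iff, sub_le_iff_le_add, sub_le_iff_le_add]
  constructor <;> norm_cast <;> omega

end Spectral

theorem Matrix.IsHermitian.toEuclideanLin_eigenvectorBasis_s11 {𝕜 ι : Type*} [RCLike 𝕜] [Fintype ι]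
    [DecidableEq ι] {A : Matrix ι ι 𝕜} (hA : A.IsHermitian) (i : ι) :
    toEuclideanLin A (hA.eigenvectorBasis i) = (hA.eigenvalues i : 𝕜) • hA.eigenvectorBasis i := by
  ext j
  simp [hA.mulVec_eigenvectorBasis, Pi.smul_apply, RCLike.real_smul_eq_coe_mul]

theorem Matrix.rank_eq_finrank_range_toEuclideanLin {𝕜 m n : Type*} [RCLike 𝕜] [Fintype m]
    [Fintype n] [DecidableEq n] (A : Matrix m n 𝕜) :
    A.rank = Module.finrank 𝕜 (LinearMap.range (toEuclideanLin A)) :=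
  A.rank_eq_finrank_range_toLin (EuclideanSpace.basisFun m 𝕜).toBasis
    (EuclideanSpace.basisFun n 𝕜).toBasis

theorem bv_rank_inequality {n : ℕ} (A B : Matrix (Fin n) (Fin n) ℂ)
    (hA : A.IsHermitian) (hB : B.IsHermitian) (f : ℝ → ℝ)
    (hf : ∀ (m : ℕ) (t : Fin (m + 1) → ℝ), StrictMono t →
      ∑ i : Fin m, |f (t i.succ) - f (t i.castSucc)| ≤ 1) :
    |(1 / (n : ℝ)) * ∑ i, f (hA.eigenvalues i) -
        (1 / (n : ℝ)) * ∑ i, f (hB.eigenvalues i)| ≤ ((A - B).rank : ℝ) / n := by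
  have hcount :
      ∀ t, |(countLE hA.eigenvalues t : ℝ) - countLE hB.eigenvalues t| ≤ (A - B).rank := by
    intro t
    rw [rank_eq_finrank_range_toEuclideanLin, map_sub]
    exact abs_countLE_sub_countLE_le_finrank_range_sub _ _
      hA.toEuclideanLin_eigenvectorBasis_s11 hB.toEuclideanLin_eigenvectorBasis_s11 t
  calc |(1 / (n : ℝ)) * ∑ i, f (hA.eigenvalues i) - (1 / (n : ℝ)) * ∑ i, f (hB.eigenvalues i)|
      = |∑ i, f (hA.eigenvalues i) - ∑ i, f (hB.eigenvalues i)| / n := by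
        rw [← mul_sub, abs_mul, abs_of_nonneg (by positivity), one_div_mul_eq_div]
    _ ≤ ((A - B).rank : ℝ) / n := by
        gcongr
        simpa using abs_sum_comp_sub_sum_comp_le hcount hf
end

section
/- (Bernstein's inequality) If X₁,…,Xₙ are independent real random variables, each with mean 0 and each bounded in absolute value by 1, and S = X₁ + ⋯ + Xₙ, then for any x > 0, P(S ≥ x) ≤ exp(−x²/(2(𝔼[S²] + x))). -/
open MeasureTheory ProbabilityTheory

/-!
Chernoff's method. For `|y| ≤ 1` and `t ≥ 0` the series of `exp (t * y) - 1 - t * y` is dominated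
termwise by `y ^ 2` times that of `exp t - 1 - t`, so a centred variable bounded by `1` has
`mgf ≤ exp ((exp t - 1 - t) σ²)`; independence multiplies these bounds, giving
`P(S ≥ x) ≤ exp (-t x + (exp t - 1 - t) V)` with `V = 𝔼[S²]`. Comparing the tail of the
exponential series with a geometric series gives `(1 - t) (exp t - 1 - t) ≤ t² / 2`, and the choice
`t = x / (V + x)`, for which `(1 - t) (V + x) = V`, turns the exponent into `-x² / (2 (V + x))`.
-/

namespace Real

open Nat in
lemma exp_sub_one_sub_eq_tsum (u : ℝ) :
    exp u - 1 - u = ∑' n : ℕ, u ^ (n + 2) / (n + 2)! := by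
  rw [exp_eq_exp_ℝ, NormedSpace.exp_eq_tsum_div]
  beta_reduce
  rw [← (summable_pow_div_factorial u).sum_add_tsum_nat_add 2]
  simp [Finset.sum_range_succ]
  ring

open Nat in
lemma summable_pow_add_two_div_factorial (u : ℝ) :
    Summable fun n : ℕ => u ^ (n + 2) / (n + 2)! :=
  (summable_nat_add_iff 2).2 (summable_pow_div_factorial u)

lemma exp_mul_le_of_abs_le_one {t y : ℝ} (ht : 0 ≤ t) (hy : |y| ≤ 1) :
    exp (t * y) ≤ 1 + t * y + y ^ 2 * (exp t - 1 - t) := by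
  have hterm (n : ℕ) : (t * y) ^ (n + 2) / (n + 2).factorial ≤
      y ^ 2 * (t ^ (n + 2) / (n + 2).factorial) := by
    rw [← mul_div_assoc]
    gcongr
    calc (t * y) ^ (n + 2) ≤ |y| ^ (n + 2) * t ^ (n + 2) := by
          rw [mul_pow, mul_comm, ← abs_pow]
          exact mul_le_mul_of_nonneg_right (le_abs_self _) (by positivity)
      _ ≤ |y| ^ 2 * t ^ (n + 2) := by
          have : |y| ^ (n + 2) ≤ |y| ^ 2 := pow_le_pow_of_le_one (abs_nonneg y) hy (by omega)
          gcongr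
      _ = y ^ 2 * t ^ (n + 2) := by rw [sq_abs]
  have := (summable_pow_add_two_div_factorial (t * y)).tsum_le_tsum hterm
    ((summable_pow_add_two_div_factorial t).mul_left _)
  rw [← exp_sub_one_sub_eq_tsum, tsum_mul_left, ← exp_sub_one_sub_eq_tsum] at this
  linarith

lemma one_sub_mul_exp_sub_one_sub_le {t : ℝ} (ht : 0 ≤ t) :
    (1 - t) * (exp t - 1 - t) ≤ t ^ 2 / 2 := by
  rcases le_or_gt 1 t with ht1 | ht1
  · have : 0 ≤ exp t - 1 - t := by linarith [add_one_le_exp t]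
    nlinarith
  have hterm (n : ℕ) : t ^ (n + 2) / (n + 2).factorial ≤ t ^ 2 / 2 * t ^ n := by
    have : (2 : ℝ) ≤ (n + 2).factorial := by
      exact_mod_cast (show 2 ≤ n + 2 by omega).trans (Nat.self_le_factorial _)
    calc t ^ (n + 2) / (n + 2).factorial ≤ t ^ (n + 2) / 2 := by gcongr
      _ = t ^ 2 / 2 * t ^ n := by ring
  have htail : exp t - 1 - t ≤ t ^ 2 / 2 * (1 - t)⁻¹ := by
    rw [exp_sub_one_sub_eq_tsum, ← tsum_geometric_of_lt_one ht ht1, ← tsum_mul_left]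
    exact (summable_pow_add_two_div_factorial t).tsum_le_tsum hterm
      ((summable_geometric_of_lt_one ht ht1).mul_left _)
  calc (1 - t) * (exp t - 1 - t) ≤ (1 - t) * (t ^ 2 / 2 * (1 - t)⁻¹) := by
        gcongr
    _ = t ^ 2 / 2 := by field_simp [(sub_pos.2 ht1).ne']

lemma neg_mul_add_exp_sub_one_sub_mul_le {t V x : ℝ} (ht : 0 ≤ t) (hVx : 0 ≤ V + x)
    (htx : t * (V + x) = x) :
    -t * x + (exp t - 1 - t) * V ≤ -t * x / 2 := by
  have hV : V = (1 - t) * (V + x) := by linear_combination htx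
  have := mul_le_mul_of_nonneg_right (one_sub_mul_exp_sub_one_sub_le ht) hVx
  rw [hV]
  nlinarith

end Real

namespace ProbabilityTheory

open Real

variable {Ω : Type*} [MeasurableSpace Ω] {P : Measure Ω} [IsProbabilityMeasure P]

lemma mgf_le_exp_mul_integral_sq {Y : Ω → ℝ} (hY : AEMeasurable Y P)
    (hmean : ∫ ω, Y ω ∂P = 0) (hbdd : ∀ᵐ ω ∂P, |Y ω| ≤ 1) {t : ℝ} (ht : 0 ≤ t) :
    mgf Y P t ≤ exp ((exp t - 1 - t) * ∫ ω, Y ω ^ 2 ∂P) := by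
  set c := exp t - 1 - t
  have hint : Integrable Y P :=
    .of_bound hY.aestronglyMeasurable 1 (by simpa only [Real.norm_eq_abs] using hbdd)
  have hint_sq : Integrable (fun ω => Y ω ^ 2) P := by
    refine .of_bound (hY.pow_const 2).aestronglyMeasurable 1 ?_
    filter_upwards [hbdd] with ω hω
    rw [norm_pow, Real.norm_eq_abs]
    exact pow_le_one₀ (abs_nonneg _) hω
  have hint_exp : Integrable (fun ω => exp (t * Y ω)) P :=
    integrable_exp_mul_of_le t 1 ht hY (hbdd.mono fun ω hω => (le_abs_self _).trans hω)
  have hint_lin : Integrable (fun ω => 1 + t * Y ω) P := (integrable_const 1).add (hint.const_mul t)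
  calc mgf Y P t ≤ ∫ ω, (1 + t * Y ω + Y ω ^ 2 * c) ∂P :=
        integral_mono_ae hint_exp (hint_lin.add (hint_sq.mul_const c))
          (hbdd.mono fun ω hω => exp_mul_le_of_abs_le_one ht hω)
    _ = 1 + c * ∫ ω, Y ω ^ 2 ∂P := by
        rw [integral_add hint_lin (hint_sq.mul_const c), integral_add (integrable_const 1)
          (hint.const_mul t), integral_const_mul, integral_mul_const, hmean]
        simp [mul_comm]
    _ ≤ exp (c * ∫ ω, Y ω ^ 2 ∂P) := by linarith [add_one_le_exp (c * ∫ ω, Y ω ^ 2 ∂P)]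

variable {ι : Type*} {X : ι → Ω → ℝ}

lemma iIndepFun.integral_sum_sq_of_integral_eq_zero (hindep : iIndepFun X P)
    (hX : ∀ i, MemLp (X i) 2 P) (hmean : ∀ i, ∫ ω, X i ω ∂P = 0) (s : Finset ι) :
    ∫ ω, (∑ i ∈ s, X i ω) ^ 2 ∂P = ∑ i ∈ s, ∫ ω, X i ω ^ 2 ∂P := by
  have hsum_mean : ∫ ω, (∑ i ∈ s, X i) ω ∂P = 0 := by
    simp only [Finset.sum_apply]
    rw [integral_finsetSum s fun i _ => (hX i).integrable one_le_two]
    simp [hmean]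
  have hvar := IndepFun.variance_sum (s := s) (fun i _ => hX i)
    fun i _ j _ hij => hindep.indepFun hij
  rw [variance_of_integral_eq_zero (Finset.aemeasurable_sum s fun i _ => (hX i).aemeasurable) hsum_mean] at hvar
  simp only [Finset.sum_apply] at hvar
  rw [hvar]
  exact Finset.sum_congr rfl fun i _ => variance_of_integral_eq_zero (hX i).aemeasurable (hmean i)

lemma iIndepFun.measureReal_sum_ge_le (hindep : iIndepFun X P) (hmeas : ∀ i, Measurable (X i))
    (hmean : ∀ i, ∫ ω, X i ω ∂P = 0) (hbdd : ∀ i, ∀ᵐ ω ∂P, |X i ω| ≤ 1) (s : Finset ι)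
    {t : ℝ} (ht : 0 ≤ t) (x : ℝ) :
    P.real {ω | x ≤ ∑ i ∈ s, X i ω} ≤
      exp (-t * x + (exp t - 1 - t) * ∫ ω, (∑ i ∈ s, X i ω) ^ 2 ∂P) := by
  have hX : ∀ i, MemLp (X i) 2 P := fun i =>
    memLp_top_of_bound (hmeas i).aestronglyMeasurable 1
      (by simpa only [Real.norm_eq_abs] using hbdd i) |>.mono_exponent le_top
  have hint_exp : Integrable (fun ω => exp (t * (∑ i ∈ s, X i) ω)) P :=
    hindep.integrable_exp_mul_sum hmeas fun i _ =>
      integrable_exp_mul_of_le t 1 ht (hmeas i).aemeasurable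
        ((hbdd i).mono fun ω hω => (le_abs_self _).trans hω)
  have hmgf : mgf (∑ i ∈ s, X i) P t ≤ exp ((exp t - 1 - t) * ∑ i ∈ s, ∫ ω, X i ω ^ 2 ∂P) := by
    rw [hindep.mgf_sum hmeas, Finset.mul_sum, exp_sum]
    exact Finset.prod_le_prod (fun i _ => mgf_nonneg) fun i _ =>
      mgf_le_exp_mul_integral_sq (hmeas i).aemeasurable (hmean i) (hbdd i) ht
  rw [hindep.integral_sum_sq_of_integral_eq_zero hX hmean, exp_add]
  calc P.real {ω | x ≤ ∑ i ∈ s, X i ω} ≤ exp (-t * x) * mgf (∑ i ∈ s, X i) P t := by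
        simpa only [Finset.sum_apply] using measure_ge_le_exp_mul_mgf x ht hint_exp
    _ ≤ _ := by gcongr

end ProbabilityTheory

theorem bernstein_inequality {Ω : Type*} [MeasurableSpace Ω] (P : Measure Ω)
    [IsProbabilityMeasure P] {n : ℕ}
    (X : Fin n → Ω → ℝ) (hXmeas : ∀ i, Measurable (X i))
    (hindep : iIndepFun X P)
    (hmean : ∀ i, ∫ ω, X i ω ∂P = 0)
    (hbdd : ∀ i, ∀ᵐ ω ∂P, |X i ω| ≤ 1)
    (x : ℝ) (hx : 0 < x) :
    P {ω | x ≤ ∑ i, X i ω} ≤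
      ENNReal.ofReal
        (Real.exp (-x ^ 2 / (2 * ((∫ ω, (∑ i, X i ω) ^ 2 ∂P) + x)))) := by
  set V := ∫ ω, (∑ i, X i ω) ^ 2 ∂P
  have hVx : 0 < V + x := add_pos_of_nonneg_of_pos (integral_nonneg fun _ => sq_nonneg _) hx
  set t := x / (V + x)
  have ht : 0 ≤ t := by positivity
  have htx : t * (V + x) = x := div_mul_cancel₀ x hVx.ne'
  rw [← ofReal_measureReal]
  gcongr
  calc P.real {ω | x ≤ ∑ i, X i ω} ≤ Real.exp (-t * x + (Real.exp t - 1 - t) * V) :=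
        hindep.measureReal_sum_ge_le hXmeas hmean hbdd Finset.univ ht x
    _ ≤ Real.exp (-t * x / 2) :=
        Real.exp_le_exp.2 (Real.neg_mul_add_exp_sub_one_sub_mul_le ht hVx.le htx)
    _ = Real.exp (-x ^ 2 / (2 * (V + x))) := by
        congr 1
        field_simp
        linear_combination -htx
end

section
/- (Stieltjes inversion) For a positive finite Borel measure μ on ℝ with Stieltjes transform s_μ(z) = ∫ (x−z)⁻¹ dμ(x) for Im z > 0: (i) for every b > 0 the function a ↦ (1/π)·Im s_μ(a+ib) is nonnegative and integrates to μ(ℝ); (ii) the measures (1/π)·Im s_μ(a+ib) da converge weakly to μ as b ↓ 0; (iii) b·Im s_μ(ib) → μ(ℝ) as b → ∞. -/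
open MeasureTheory Filter Real

/-- The Stieltjes transform of a measure on `ℝ`. -/
noncomputable def stieltjes (μ : Measure ℝ) (z : ℂ) : ℂ :=
  ∫ x, ((x : ℂ) - z)⁻¹ ∂μ

/-!
For `z = a + b i` one has `Im (x - z)⁻¹ = b / ((x - a) ^ 2 + b ^ 2)`, so `π⁻¹ Im s_μ (a + b i)` is
the density of `μ` convolved with the Cauchy distribution of scale `b`. By Fubini, integrating a
bounded `f` against this density gives `∫ P_b f dμ`, where `P_b f x = ∫ f (x + b t) dCauchy(t)` is
the Poisson integral of `f`. For bounded continuous `f`, `P_b f → f` pointwise and boundedly as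
`b → 0`, so dominated convergence gives (ii), and `f = 1` gives (i). Finally
`b Im s_μ (b i) = ∫ (1 + (x / b) ^ 2)⁻¹ dμ(x) → μ ℝ`, again by dominated convergence.
-/

open ProbabilityTheory
open scoped NNReal

lemma im_inv_ofReal_sub (x : ℝ) (z : ℂ) :
    ((x : ℂ) - z)⁻¹.im = z.im / ((x - z.re) ^ 2 + z.im ^ 2) := by
  simp only [Complex.inv_im, Complex.normSq_apply, Complex.sub_re, Complex.sub_im,
    Complex.ofReal_re, Complex.ofReal_im]
  ring

lemma norm_inv_ofReal_sub_le (x : ℝ) {z : ℂ} (hz : z.im ≠ 0) :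
    ‖((x : ℂ) - z)⁻¹‖ ≤ |z.im|⁻¹ := by
  rw [norm_inv]
  refine inv_anti₀ (abs_pos.2 hz) ?_
  simpa using Complex.abs_im_le_norm ((x : ℂ) - z)

lemma integrable_inv_ofReal_sub (μ : Measure ℝ) [IsFiniteMeasure μ] {z : ℂ} (hz : z.im ≠ 0) :
    Integrable (fun x : ℝ => ((x : ℂ) - z)⁻¹) μ := by
  have hne : ∀ x : ℝ, (x : ℂ) - z ≠ 0 := fun x h => hz (by simpa using congrArg Complex.im h)
  exact (integrable_const |z.im|⁻¹).mono'
    ((Complex.continuous_ofReal.sub continuous_const).inv₀ hne).aestronglyMeasurable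
    (ae_of_all _ fun x => norm_inv_ofReal_sub_le x hz)

lemma stieltjes_im (μ : Measure ℝ) [IsFiniteMeasure μ] {z : ℂ} (hz : z.im ≠ 0) :
    (stieltjes μ z).im = ∫ x, z.im / ((x - z.re) ^ 2 + z.im ^ 2) ∂μ := by
  simp_rw [← im_inv_ofReal_sub]
  exact (integral_im (integrable_inv_ofReal_sub μ hz)).symm

lemma cauchyPDFReal_nonneg (x₀ : ℝ) (γ : ℝ≥0) (x : ℝ) : 0 ≤ cauchyPDFReal x₀ γ x := by
  rw [cauchyPDFReal_def]
  positivity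

lemma norm_mul_cauchyPDFReal_le {f : ℝ → ℝ} {C : ℝ} (hC : ∀ x, |f x| ≤ C) (x₀ : ℝ) (γ : ℝ≥0)
    (y x : ℝ) : ‖f y * cauchyPDFReal x₀ γ x‖ ≤ C * cauchyPDFReal x₀ γ x := by
  rw [norm_mul, Real.norm_eq_abs, Real.norm_of_nonneg (cauchyPDFReal_nonneg x₀ γ x)]
  exact mul_le_mul_of_nonneg_right (hC y) (cauchyPDFReal_nonneg x₀ γ x)

lemma cauchyPDFReal_add_mul {b : ℝ} (hb : 0 < b) (x t : ℝ) :
    cauchyPDFReal x b.toNNReal (x + b * t) = b⁻¹ * cauchyPDFReal 0 1 t := by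
  simp only [cauchyPDFReal_def, Real.coe_toNNReal b hb.le, NNReal.coe_one]
  field_simp
  ring

lemma integral_cauchyPDFReal_eq_integral_cauchyPDFReal_zero (x₀ : ℝ) (γ : ℝ≥0) :
    ∫ x, cauchyPDFReal x₀ γ x = ∫ x, cauchyPDFReal 0 γ x := by
  simpa [cauchyPDFReal_def] using integral_sub_right_eq_self (cauchyPDFReal 0 γ) x₀

lemma integrable_cauchyPDFReal_prod (μ : Measure ℝ) [IsFiniteMeasure μ] (γ : ℝ≥0) :
    Integrable (fun p : ℝ × ℝ => cauchyPDFReal p.2 γ p.1) (volume.prod μ) := by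
  refine (integrable_prod_iff' (by unfold cauchyPDFReal; fun_prop)).2
    ⟨ae_of_all _ fun x => integrable_cauchyPDFReal x,
      (integrable_const (∫ a, cauchyPDFReal 0 γ a)).congr ?_⟩
  refine ae_of_all _ fun x => ?_
  simp only [Real.norm_of_nonneg (cauchyPDFReal_nonneg _ _ _)]
  exact (integral_cauchyPDFReal_eq_integral_cauchyPDFReal_zero x γ).symm

lemma integral_mul_integral_cauchyPDFReal (μ : Measure ℝ) [IsFiniteMeasure μ] {f : ℝ → ℝ}
    (hf : Measurable f) {C : ℝ} (hC : ∀ x, |f x| ≤ C) (γ : ℝ≥0) :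
    ∫ a, f a * ∫ x, cauchyPDFReal x γ a ∂μ = ∫ x, (∫ a, f a * cauchyPDFReal x γ a) ∂μ := by
  have hint : Integrable (fun p : ℝ × ℝ => f p.1 * cauchyPDFReal p.2 γ p.1) (volume.prod μ) :=
    ((integrable_cauchyPDFReal_prod μ γ).const_mul C).mono'
      (by unfold cauchyPDFReal; fun_prop)
      (ae_of_all _ fun p => norm_mul_cauchyPDFReal_le hC p.2 γ p.1 p.1)
  simp_rw [← integral_const_mul]
  exact integral_integral_swap (f := fun a x => f a * cauchyPDFReal x γ a) hint

/-- The Poisson integral of `f` at `x + b i`, written after the substitution `a = x + b t`. -/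
noncomputable def poissonIntegral (f : ℝ → ℝ) (x b : ℝ) : ℝ :=
  ∫ t, f (x + b * t) * cauchyPDFReal 0 1 t

lemma integral_mul_cauchyPDFReal (f : ℝ → ℝ) {b : ℝ} (hb : 0 < b) (x : ℝ) :
    ∫ a, f a * cauchyPDFReal x b.toNNReal a = poissonIntegral f x b := by
  set g : ℝ → ℝ := fun a => f a * cauchyPDFReal x b.toNNReal a
  have hg : ∀ t, f (x + b * t) * cauchyPDFReal 0 1 t = b * g (x + b * t) := fun t => by
    simp only [g, cauchyPDFReal_add_mul hb]
    field_simp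
  rw [poissonIntegral, integral_congr_ae (ae_of_all _ hg), integral_const_mul,
    Measure.integral_comp_mul_left (fun y => g (x + y)), integral_add_left_eq_self,
    abs_inv, abs_of_pos hb, smul_eq_mul, mul_inv_cancel_left₀ hb.ne']

lemma poissonIntegral_one (x b : ℝ) : poissonIntegral 1 x b = 1 := by
  simp [poissonIntegral, integral_cauchyPDFReal_eq_one]

lemma abs_poissonIntegral_le {f : ℝ → ℝ} {C : ℝ} (hC : ∀ x, |f x| ≤ C) (x b : ℝ) :
    |poissonIntegral f x b| ≤ C := by
  calc |poissonIntegral f x b| ≤ ∫ t, C * cauchyPDFReal 0 1 t :=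
        norm_integral_le_of_norm_le ((integrable_cauchyPDFReal 0).const_mul C)
          (ae_of_all _ fun t => norm_mul_cauchyPDFReal_le hC 0 1 (x + b * t) t)
    _ = C := by rw [integral_const_mul, integral_cauchyPDFReal_eq_one 0 one_ne_zero, mul_one]

lemma tendsto_poissonIntegral {f : ℝ → ℝ} (hf : Continuous f) {C : ℝ} (hC : ∀ x, |f x| ≤ C)
    (x : ℝ) : Tendsto (poissonIntegral f x) (nhds 0) (nhds (f x)) := by
  have h := tendsto_integral_filter_of_dominated_convergence
    (F := fun b t => f (x + b * t) * cauchyPDFReal 0 1 t) (l := nhds (0 : ℝ))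
    (f := fun t => f x * cauchyPDFReal 0 1 t)
    (fun t => C * cauchyPDFReal 0 1 t) ?_ ?_ ((integrable_cauchyPDFReal 0).const_mul C) ?_
  · rwa [integral_const_mul, integral_cauchyPDFReal_eq_one 0 one_ne_zero, mul_one] at h
  · exact Eventually.of_forall fun b => by fun_prop
  · exact Eventually.of_forall fun b =>
      ae_of_all _ fun t => norm_mul_cauchyPDFReal_le hC 0 1 (x + b * t) t
  · refine ae_of_all _ fun t => ?_
    have : Continuous fun b => f (x + b * t) * cauchyPDFReal 0 1 t := by fun_prop
    simpa using this.tendsto 0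

lemma inv_pi_mul_stieltjes_im (μ : Measure ℝ) [IsFiniteMeasure μ] {b : ℝ} (hb : 0 < b) (a : ℝ) :
    π⁻¹ * (stieltjes μ (a + b * Complex.I)).im = ∫ x, cauchyPDFReal x b.toNNReal a ∂μ := by
  rw [stieltjes_im μ (by simpa using hb.ne'), ← integral_const_mul]
  congr 1 with x
  rw [cauchyPDFReal_def, Real.coe_toNNReal b hb.le]
  simp only [Complex.add_re, Complex.add_im, Complex.ofReal_re, Complex.ofReal_im,
    Complex.mul_re, Complex.mul_im, Complex.I_re, Complex.I_im]
  ring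

lemma integral_mul_inv_pi_mul_stieltjes_im (μ : Measure ℝ) [IsFiniteMeasure μ] {f : ℝ → ℝ}
    (hf : Measurable f) {C : ℝ} (hC : ∀ x, |f x| ≤ C) {b : ℝ} (hb : 0 < b) :
    ∫ a : ℝ, f a * (π⁻¹ * (stieltjes μ (a + b * Complex.I)).im)
      = ∫ x, poissonIntegral f x b ∂μ := by
  simp_rw [inv_pi_mul_stieltjes_im μ hb, integral_mul_integral_cauchyPDFReal μ hf hC,
    integral_mul_cauchyPDFReal f hb]

lemma integral_inv_pi_mul_stieltjes_im (μ : Measure ℝ) [IsFiniteMeasure μ] {b : ℝ} (hb : 0 < b) :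
    ∫ a : ℝ, π⁻¹ * (stieltjes μ (a + b * Complex.I)).im = μ.real Set.univ := by
  simpa [poissonIntegral_one] using
    integral_mul_inv_pi_mul_stieltjes_im μ measurable_one (C := 1) (by simp) hb

lemma tendsto_integral_mul_inv_pi_mul_stieltjes_im (μ : Measure ℝ) [IsFiniteMeasure μ]
    {f : ℝ → ℝ} (hf : Continuous f) {C : ℝ} (hC : ∀ x, |f x| ≤ C) :
    Tendsto (fun b : ℝ => ∫ a : ℝ, f a * (π⁻¹ * (stieltjes μ (a + b * Complex.I)).im))
      (nhdsWithin 0 (Set.Ioi 0)) (nhds (∫ x, f x ∂μ)) := by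
  have hlim : Tendsto (fun b => ∫ x, poissonIntegral f x b ∂μ) (nhdsWithin 0 (Set.Ioi 0))
      (nhds (∫ x, f x ∂μ)) := by
    refine tendsto_integral_filter_of_dominated_convergence (fun _ => C) ?_ ?_
      (integrable_const C) (ae_of_all _ fun x => ?_)
    · refine Eventually.of_forall fun b => ?_
      have hmeas : Measurable fun p : ℝ × ℝ => f (p.1 + b * p.2) * cauchyPDFReal 0 1 p.2 := by
        fun_prop
      exact hmeas.aestronglyMeasurable.integral_prod_right' (μ := μ) (ν := volume)
    · exact Eventually.of_forall fun b => ae_of_all _ fun x => abs_poissonIntegral_le hC x b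
    · exact (tendsto_poissonIntegral hf hC x).mono_left nhdsWithin_le_nhds
  refine hlim.congr' ?_
  filter_upwards [self_mem_nhdsWithin] with b hb
  exact (integral_mul_inv_pi_mul_stieltjes_im μ hf.measurable hC hb).symm

lemma mul_stieltjes_im_mul_I (μ : Measure ℝ) [IsFiniteMeasure μ] {b : ℝ} (hb : 0 < b) :
    b * (stieltjes μ (b * Complex.I)).im = ∫ x, (1 + (x / b) ^ 2)⁻¹ ∂μ := by
  rw [stieltjes_im μ (by simpa using hb.ne'), ← integral_const_mul]
  congr 1 with x
  simp only [Complex.mul_re, Complex.mul_im, Complex.ofReal_re, Complex.ofReal_im,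
    Complex.I_re, Complex.I_im]
  field_simp
  ring

lemma tendsto_mul_stieltjes_im_mul_I_atTop (μ : Measure ℝ) [IsFiniteMeasure μ] :
    Tendsto (fun b : ℝ => b * (stieltjes μ (b * Complex.I)).im) atTop (nhds (μ.real Set.univ)) := by
  have hlim : Tendsto (fun b : ℝ => ∫ x, (1 + (x / b) ^ 2)⁻¹ ∂μ) atTop
      (nhds (∫ _, (1 : ℝ) ∂μ)) := by
    refine tendsto_integral_filter_of_dominated_convergence (fun _ => 1)
      (Eventually.of_forall fun b => by fun_prop) ?_ (integrable_const 1) (ae_of_all _ fun x => ?_)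
    · refine Eventually.of_forall fun b => ae_of_all _ fun x => ?_
      rw [Real.norm_of_nonneg (by positivity)]
      exact inv_le_one_of_one_le₀ (le_add_of_nonneg_right (sq_nonneg _))
    · have hx : Tendsto (fun b : ℝ => x / b) atTop (nhds 0) :=
        tendsto_const_nhds.div_atTop tendsto_id
      simpa using ((hx.pow 2).const_add 1).inv₀ (by norm_num)
  rw [integral_const, smul_eq_mul, mul_one] at hlim
  refine hlim.congr' ?_
  filter_upwards [eventually_gt_atTop 0] with b hb
  exact (mul_stieltjes_im_mul_I μ hb).symm

theorem stieltjes_inversion (μ : Measure ℝ) [IsFiniteMeasure μ] :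
    (∀ b : ℝ, 0 < b →
      (∀ a : ℝ, 0 ≤ π⁻¹ * (stieltjes μ (a + b * Complex.I)).im) ∧
      ∫ a : ℝ, π⁻¹ * (stieltjes μ (a + b * Complex.I)).im = (μ Set.univ).toReal) ∧
    (∀ f : ℝ → ℝ, Continuous f → (∃ C, ∀ x, |f x| ≤ C) →
      Tendsto (fun b : ℝ => ∫ a : ℝ, f a * (π⁻¹ * (stieltjes μ (a + b * Complex.I)).im))
        (nhdsWithin 0 (Set.Ioi 0)) (nhds (∫ x, f x ∂μ))) ∧
    Tendsto (fun b : ℝ => b * (stieltjes μ (b * Complex.I)).im) atTop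
      (nhds (μ Set.univ).toReal) := by
  refine ⟨fun b hb => ⟨fun a => ?_, integral_inv_pi_mul_stieltjes_im μ hb⟩,
    fun f hf ⟨C, hC⟩ => tendsto_integral_mul_inv_pi_mul_stieltjes_im μ hf hC,
    tendsto_mul_stieltjes_im_mul_I_atTop μ⟩
  rw [inv_pi_mul_stieltjes_im μ hb]
  exact integral_nonneg fun x => cauchyPDFReal_nonneg x _ a
end
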